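/- There does not exist a connected signed graph Σ on n vertices such that λ_n(D^max(Σ)) lies in the open interval (−2,−1), and there does not exist a connected signed graph Σ on n vertices such that λ_n(D^min(Σ)) lies in the open interval (−2,−1). -/

import Mathlib

/-- The least (real) eigenvalue `λₙ` of a matrix. -/
noncomputable def lambdaMin {V : Type*} [Fintype V] (M : Matrix V V ℝ) : ℝ :=
  sInf {μ : ℝ | ∃ x : V → ℝ, x ≠ 0 ∧ M.mulVec x = μ • x}

/-- The sign of a walk: the product of the signs of its edges. -/
noncomputable def walkSign {V : Type*} {G : SimpleGraph V} (σ : V → V → ℝ)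
    {u v : V} (p : G.Walk u v) : ℝ :=
  (p.darts.map fun d => σ d.toProd.1 d.toProd.2).prod

/-- `σ` is a signature for `G`: symmetric, and `±1` on every edge. -/
def EdgeSigns {V : Type*} (G : SimpleGraph V) (σ : V → V → ℝ) : Prop :=
  (∀ u v, σ u v = σ v u) ∧ ∀ u v, G.Adj u v → σ u v = 1 ∨ σ u v = -1

/-- A signed graph is balanced if every cycle has positive sign. -/
def IsBalanced {V : Type*} (G : SimpleGraph V) (σ : V → V → ℝ) : Prop :=
  ∀ (u : V) (p : G.Walk u u), p.IsCycle → walkSign σ p = 1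

/-- `σ_max(u,v)`: the maximum sign of a shortest `u`–`v` path. -/
noncomputable def sigmaMax {V : Type*} (G : SimpleGraph V) (σ : V → V → ℝ) (u v : V) : ℝ :=
  sSup {s : ℝ | ∃ p : G.Walk u v, p.length = G.dist u v ∧ walkSign σ p = s}

/-- `σ_min(u,v)`: the minimum sign of a shortest `u`–`v` path. -/
noncomputable def sigmaMin {V : Type*} (G : SimpleGraph V) (σ : V → V → ℝ) (u v : V) : ℝ :=
  sInf {s : ℝ | ∃ p : G.Walk u v, p.length = G.dist u v ∧ walkSign σ p = s}

/-- The signed distance matrix `D^max(Σ)`. -/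
noncomputable def Dmax {V : Type*} (G : SimpleGraph V) (σ : V → V → ℝ) : Matrix V V ℝ :=
  fun u v => sigmaMax G σ u v * (G.dist u v : ℝ)

/-- The signed distance matrix `D^min(Σ)`. -/
noncomputable def Dmin {V : Type*} (G : SimpleGraph V) (σ : V → V → ℝ) : Matrix V V ℝ :=
  fun u v => sigmaMin G σ u v * (G.dist u v : ℝ)

/-- `G` has diameter `d`. -/
def HasDiameter {V : Type*} (G : SimpleGraph V) (d : ℕ) : Prop :=
  (∀ u v, G.dist u v ≤ d) ∧ ∃ u v, G.dist u v = d

/-!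
Both signed distance matrices of a connected signed graph are symmetric, with zero diagonal and
nonzero integer off-diagonal entries `±d(u,v)`, and the least eigenvalue of every such matrix `M`
avoids `(-2, -1)`. If some `|M u v| ≥ 2`, the vector `|M u v| e_u - M u v e_v` has Rayleigh
quotient `-|M u v| ≤ -2`. Otherwise every off-diagonal entry is `±1`. A negative triangle
`M u v * M u w * M v w = -1` gives the vector `e_u - M u v e_v - M u w e_w` of Rayleigh quotient
`-2`. If all triangles are positive, switching at a vertex `w` turns `M` into `J - I`, that is,
`M = s sᵀ - I` with `s i = M i w` for `i ≠ w`, and `xᵀ M x = (s ⬝ x)² - x ⬝ x` shows that the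
least eigenvalue is at least `-1`.
-/

section Spectral

open Matrix Module.End

variable {V : Type*} [Fintype V] {M : Matrix V V ℝ}

lemma setOf_exists_mulVec_eq_smul_eq_spectrum [DecidableEq V] (M : Matrix V V ℝ) :
    {μ : ℝ | ∃ x : V → ℝ, x ≠ 0 ∧ M *ᵥ x = μ • x} = spectrum ℝ M := by
  ext μ
  rw [Set.mem_ofPred_eq, ← spectrum_toLin', ← hasEigenvalue_iff_mem_spectrum]
  constructor
  · rintro ⟨x, hx, hMx⟩
    exact hasEigenvalue_of_hasEigenvector ⟨mem_eigenspace_iff.2 (by simpa using hMx), hx⟩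
  · intro h
    obtain ⟨x, hx⟩ := h.exists_hasEigenvector
    exact ⟨x, hx.2, by simpa using hx.apply_eq_smul⟩

lemma lambdaMin_mul_dotProduct_self_le [DecidableEq V] (hM : M.IsHermitian) (x : V → ℝ) :
    lambdaMin M * (x ⬝ᵥ x) ≤ x ⬝ᵥ M *ᵥ x := by
  have hpsd : (M - algebraMap ℝ _ (lambdaMin M)).PosSemidef := by
    rw [posSemidef_iff_isHermitian_and_spectrum_nonneg, ← spectrum.sub_singleton_eq]
    refine ⟨hM.sub ?_, ?_⟩
    · rw [Algebra.algebraMap_eq_smul_one]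
      exact isHermitian_one.smul (IsSelfAdjoint.all _)
    rintro _ ⟨μ, hμ, _, rfl, rfl⟩
    rw [lambdaMin, setOf_exists_mulVec_eq_smul_eq_spectrum]
    exact sub_nonneg.2 (csInf_le finite_real_spectrum.bddBelow hμ)
  have := hpsd.dotProduct_mulVec_nonneg x
  rw [Algebra.algebraMap_eq_smul_one] at this
  simpa [sub_mulVec, smul_mulVec, dotProduct_smul, sub_nonneg] using this

lemma lambdaMin_le_of_dotProduct_mulVec_le [DecidableEq V] (hM : M.IsHermitian) {x : V → ℝ}
    (hx : x ≠ 0) {c : ℝ} (h : x ⬝ᵥ M *ᵥ x ≤ c * (x ⬝ᵥ x)) : lambdaMin M ≤ c :=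
  le_of_mul_le_mul_right ((lambdaMin_mul_dotProduct_self_le hM x).trans h)
    (by simpa using dotProduct_star_self_pos_iff.2 hx)

-- `hc` is forced by the empty matrix, whose `lambdaMin` is `sInf ∅ = 0`.
lemma le_lambdaMin_of_le_dotProduct_mulVec {c : ℝ} (hc : c ≤ 0)
    (h : ∀ x, c * (x ⬝ᵥ x) ≤ x ⬝ᵥ M *ᵥ x) : c ≤ lambdaMin M := by
  refine Real.le_sInf ?_ hc
  rintro μ ⟨x, hx, hMx⟩
  have hcx := h x
  rw [hMx, dotProduct_smul, smul_eq_mul] at hcx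
  exact le_of_mul_le_mul_right hcx (by simpa using dotProduct_star_self_pos_iff.2 hx)

end Spectral

section TestVectors

open Matrix

variable {V : Type*} [Fintype V] [DecidableEq V] {M : Matrix V V ℝ}

lemma lambdaMin_le_neg_abs (hM : M.IsHermitian) (hdiag : ∀ i, M i i = 0) {u v : V}
    (huv : u ≠ v) (hMuv : M u v ≠ 0) : lambdaMin M ≤ -|M u v| := by
  have hvu : M v u = M u v := by simpa using hM.apply u v
  let x : V → ℝ := Pi.single u |M u v| + Pi.single v (-M u v)
  have hx : x ≠ 0 := fun h => hMuv (by simpa [x, huv.symm] using congrFun h v)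
  refine lambdaMin_le_of_dotProduct_mulVec_le hM hx (le_of_eq ?_)
  simp only [x, mulVec_add, mulVec_single, op_smul_eq_smul, MulOpposite.op_neg, neg_smul,
    dotProduct_add, dotProduct_smul, add_dotProduct, single_dotProduct, col_apply, hdiag, mul_zero,
    hvu, neg_mul, zero_add, smul_eq_mul, mul_neg, dotProduct_neg, add_zero, dotProduct_single,
    Pi.add_apply, Pi.single_eq_same, Pi.single_eq_of_ne huv, Pi.single_eq_of_ne huv.symm,
    abs_mul_abs_self, neg_neg]
  ring

lemma lambdaMin_le_neg_two_of_neg_triangle (hM : M.IsHermitian) (hdiag : ∀ i, M i i = 0)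
    {u v w : V} (huv : u ≠ v) (huw : u ≠ w) (hvw : v ≠ w)
    (htri : M u v * M u w * M v w = -1) : lambdaMin M ≤ -2 := by
  have hvu : M v u = M u v := by simpa using hM.apply u v
  have hwu : M w u = M u w := by simpa using hM.apply u w
  have hwv : M w v = M v w := by simpa using hM.apply v w
  let x : V → ℝ := Pi.single u 1 + Pi.single v (-M u v) + Pi.single w (-M u w)
  have hx : x ≠ 0 := fun h => by simpa [x, huv, huw] using congrFun h u
  refine lambdaMin_le_of_dotProduct_mulVec_le hM hx (le_of_eq ?_)
  simp only [x, mulVec_add, mulVec_single, MulOpposite.op_one, one_smul, MulOpposite.op_neg,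
    neg_smul, op_smul_eq_smul, dotProduct_add, add_dotProduct, single_dotProduct, col_apply, hdiag,
    mul_zero, hvu, neg_mul, zero_add, hwu, dotProduct_neg, dotProduct_smul, one_mul, add_zero, hwv,
    smul_eq_mul, dotProduct_single, Pi.add_apply, Pi.single_eq_same, Pi.single_eq_of_ne huv,
    Pi.single_eq_of_ne huw, Pi.single_eq_of_ne hvw, Pi.single_eq_of_ne huv.symm,
    Pi.single_eq_of_ne huw.symm, Pi.single_eq_of_ne hvw.symm, mul_one, mul_neg, neg_neg]
  linear_combination 2 * htri

end TestVectors

section Switching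

open Matrix

variable {V : Type*} [DecidableEq V] {M : Matrix V V ℝ}

lemma neg_one_le_lambdaMin_vecMulVec_sub_one [Fintype V] (s : V → ℝ) :
    -1 ≤ lambdaMin (vecMulVec s s - 1) := by
  refine le_lambdaMin_of_le_dotProduct_mulVec (by norm_num) fun x => ?_
  rw [sub_mulVec, one_mulVec, dotProduct_sub, vecMulVec_mulVec, dotProduct_comm s x]
  simp only [op_smul_eq_smul, dotProduct_smul, smul_eq_mul]
  nlinarith [mul_self_nonneg (x ⬝ᵥ s)]

lemma exists_eq_vecMulVec_sub_one (hM : M.IsHermitian) (hdiag : ∀ i, M i i = 0)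
    (hoff : ∀ i j, i ≠ j → M i j ^ 2 = 1)
    (htri : ∀ i j k, i ≠ j → i ≠ k → j ≠ k → M i j * M i k * M j k = 1) :
    ∃ s : V → ℝ, M = vecMulVec s s - 1 := by
  rcases isEmpty_or_nonempty V with hV | ⟨⟨w⟩⟩
  · exact ⟨0, ext fun i => isEmptyElim i⟩
  refine ⟨fun i => if i = w then 1 else M i w, ext fun i j => ?_⟩
  have hsymm : ∀ i j, M i j = M j i := fun i j => by simpa using hM.apply j i
  rcases eq_or_ne i j with rfl | hij
  · by_cases hiw : i = w <;> simp [vecMulVec_apply, hdiag, hiw, ← sq, hoff]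
  by_cases hiw : i = w
  · subst hiw
    simp [vecMulVec_apply, hij, hij.symm, hsymm i j]
  by_cases hjw : j = w
  · subst hjw
    simp [vecMulVec_apply, hij]
  simp only [vecMulVec_apply, hiw, hjw, if_false, Matrix.sub_apply, one_apply_ne hij, sub_zero]
  linear_combination M i w * M j w * htri i j w hij hiw hjw
    - M i j * M j w ^ 2 * hoff i w hiw - M i j * hoff j w hjw

end Switching

section ZeroDiagonal

open Matrix

variable {V : Type*} [Fintype V] [DecidableEq V] {M : Matrix V V ℝ}

lemma lambdaMin_notMem_Ioo_of_offDiag_sq_eq_one (hM : M.IsHermitian) (hdiag : ∀ i, M i i = 0)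
    (hoff : ∀ i j, i ≠ j → M i j ^ 2 = 1) : lambdaMin M ∉ Set.Ioo (-2) (-1) := by
  by_cases hneg : ∃ u v w, u ≠ v ∧ u ≠ w ∧ v ≠ w ∧ M u v * M u w * M v w = -1
  · obtain ⟨u, v, w, huv, huw, hvw, htri⟩ := hneg
    exact fun h => (lambdaMin_le_neg_two_of_neg_triangle hM hdiag huv huw hvw htri).not_gt h.1
  push Not at hneg
  have htri : ∀ i j k, i ≠ j → i ≠ k → j ≠ k → M i j * M i k * M j k = 1 := by
    intro i j k hij hik hjk
    have hsq : (M i j * M i k * M j k) ^ 2 = 1 := by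
      rw [mul_pow, mul_pow, hoff i j hij, hoff i k hik, hoff j k hjk]; norm_num
    exact (sq_eq_one_iff.1 hsq).resolve_right (hneg i j k hij hik hjk)
  obtain ⟨s, rfl⟩ := exists_eq_vecMulVec_sub_one hM hdiag hoff htri
  exact fun h => (neg_one_le_lambdaMin_vecMulVec_sub_one s).not_gt h.2

theorem lambdaMin_notMem_Ioo_of_offDiag_intCast (hM : M.IsHermitian) (hdiag : ∀ i, M i i = 0)
    (hint : ∀ i j, i ≠ j → ∃ k : ℤ, k ≠ 0 ∧ M i j = k) :
    lambdaMin M ∉ Set.Ioo (-2) (-1) := by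
  by_cases hbig : ∃ i j, i ≠ j ∧ 2 ≤ |M i j|
  · obtain ⟨i, j, hij, h2⟩ := hbig
    obtain ⟨k, hk, hMk⟩ := hint i j hij
    have := lambdaMin_le_neg_abs hM hdiag hij (by rw [hMk]; exact_mod_cast hk)
    exact fun h => by linarith [h.1]
  push Not at hbig
  refine lambdaMin_notMem_Ioo_of_offDiag_sq_eq_one hM hdiag fun i j hij => ?_
  obtain ⟨k, hk, hMk⟩ := hint i j hij
  have hk2 : |k| < 2 := by exact_mod_cast hMk ▸ hbig i j hij
  obtain rfl | rfl : k = 1 ∨ k = -1 := by rw [abs_lt] at hk2; omega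
  all_goals simp [hMk]

end ZeroDiagonal

section Signs

open SimpleGraph

variable {V : Type*} {G : SimpleGraph V} {σ : V → V → ℝ}

lemma walkSign_cons {u v w : V} (h : G.Adj u v) (p : G.Walk v w) :
    walkSign σ (Walk.cons h p) = σ u v * walkSign σ p := by
  simp [walkSign]

lemma walkSign_eq_one_or_neg_one (hσ : EdgeSigns G σ) {u v : V} (p : G.Walk u v) :
    walkSign σ p = 1 ∨ walkSign σ p = -1 := by
  induction p with
  | nil => simp [walkSign]
  | cons h p ih =>
    rw [walkSign_cons]
    rcases hσ.2 _ _ h with h1 | h1 <;> rcases ih with h2 | h2 <;> simp [h1, h2]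

lemma walkSign_reverse (hσ : ∀ u v, σ u v = σ v u) {u v : V} (p : G.Walk u v) :
    walkSign σ p.reverse = walkSign σ p := by
  simp only [walkSign, Walk.darts_reverse, List.map_reverse, List.prod_reverse, List.map_map]
  exact congrArg List.prod (List.map_congr_left fun d _ => hσ _ _)

def shortestWalkSigns (G : SimpleGraph V) (σ : V → V → ℝ) (u v : V) : Set ℝ :=
  {s | ∃ p : G.Walk u v, p.length = G.dist u v ∧ walkSign σ p = s}

lemma shortestWalkSigns_comm (hσ : ∀ u v, σ u v = σ v u) (u v : V) :
    shortestWalkSigns G σ u v = shortestWalkSigns G σ v u := by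
  have key : ∀ u v, shortestWalkSigns G σ u v ⊆ shortestWalkSigns G σ v u := by
    rintro u v _ ⟨p, hp, rfl⟩
    exact ⟨p.reverse, by rw [Walk.length_reverse, hp, dist_comm], walkSign_reverse hσ p⟩
  exact (key u v).antisymm (key v u)

lemma shortestWalkSigns_subset (hσ : EdgeSigns G σ) (u v : V) :
    shortestWalkSigns G σ u v ⊆ {1, -1} := by
  rintro _ ⟨p, -, rfl⟩
  exact walkSign_eq_one_or_neg_one hσ p

lemma SimpleGraph.Reachable.shortestWalkSigns_nonempty {u v : V} (h : G.Reachable u v) :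
    (shortestWalkSigns G σ u v).Nonempty :=
  let ⟨p, hp⟩ := h.exists_walk_length_eq_dist
  ⟨_, p, hp, rfl⟩

lemma sigmaMax_comm (hσ : EdgeSigns G σ) (u v : V) : sigmaMax G σ u v = sigmaMax G σ v u :=
  congrArg sSup (shortestWalkSigns_comm hσ.1 u v)

lemma sigmaMin_comm (hσ : EdgeSigns G σ) (u v : V) : sigmaMin G σ u v = sigmaMin G σ v u :=
  congrArg sInf (shortestWalkSigns_comm hσ.1 u v)

lemma sigmaMax_eq_one_or_neg_one (hσ : EdgeSigns G σ) {u v : V} (h : G.Reachable u v) :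
    sigmaMax G σ u v = 1 ∨ sigmaMax G σ u v = -1 :=
  shortestWalkSigns_subset hσ u v <| h.shortestWalkSigns_nonempty.csSup_mem
    ((Set.toFinite _).subset (shortestWalkSigns_subset hσ u v))

lemma sigmaMin_eq_one_or_neg_one (hσ : EdgeSigns G σ) {u v : V} (h : G.Reachable u v) :
    sigmaMin G σ u v = 1 ∨ sigmaMin G σ u v = -1 :=
  shortestWalkSigns_subset hσ u v <| h.shortestWalkSigns_nonempty.csInf_mem
    ((Set.toFinite _).subset (shortestWalkSigns_subset hσ u v))

end Signs

section SignedDistance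

open Matrix

variable {V : Type*} [Fintype V] [DecidableEq V] {G : SimpleGraph V}

theorem lambdaMin_signedDist_notMem_Ioo (hG : G.Connected) {ε : V → V → ℝ}
    (hsymm : ∀ u v, ε u v = ε v u) (hpm : ∀ u v, ε u v = 1 ∨ ε u v = -1) :
    lambdaMin (of fun u v => ε u v * G.dist u v) ∉ Set.Ioo (-2) (-1) := by
  refine lambdaMin_notMem_Ioo_of_offDiag_intCast ?_ (fun u => by simp) fun u v huv => ?_
  · refine IsHermitian.ext fun u v => ?_
    simp [hsymm u v, SimpleGraph.dist_comm]
  have hd : G.dist u v ≠ 0 := fun h => huv (hG.dist_eq_zero_iff.1 h)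
  rcases hpm u v with h | h
  · exact ⟨G.dist u v, by exact_mod_cast hd, by simp [h]⟩
  · exact ⟨-G.dist u v, by simpa using hd, by simp [h]⟩

end SignedDistance

/-- There is no connected signed graph whose least `D^max`-eigenvalue lies
in the open interval `(-2, -1)`, and none whose least `D^min`-eigenvalue lies in `(-2, -1)`. -/
theorem stmt15 (n : ℕ) (G : SimpleGraph (Fin n)) (σ : Fin n → Fin n → ℝ)
    (hG : G.Connected) (hσ : EdgeSigns G σ) :
    ¬ lambdaMin (Dmax G σ) ∈ Set.Ioo (-2 : ℝ) (-1) ∧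
    ¬ lambdaMin (Dmin G σ) ∈ Set.Ioo (-2 : ℝ) (-1) :=
  ⟨lambdaMin_signedDist_notMem_Ioo hG (sigmaMax_comm hσ)
      fun u v => sigmaMax_eq_one_or_neg_one hσ (hG.preconnected u v),
    lambdaMin_signedDist_notMem_Ioo hG (sigmaMin_comm hσ)
      fun u v => sigmaMin_eq_one_or_neg_one hσ (hG.preconnected u v)⟩
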